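/- arXiv:1511.02913 — 3 statements merged into one kernel-verified Lean document; each statement's English description precedes it below -/
import Mathlib

section
/- Let T be a depth-first search tree of a directed graph G, and let pre(v) denote the preorder number of vertex v in T. If v and w are vertices with pre(v) < pre(w), then every directed path from v to w in G contains a common ancestor of v and w in T. -/
namespace StrongConn

variable {V : Type*}

/-- `p` is a walk in the digraph `G` from `u` to `v`, recorded as the list of visited vertices. -/
def IsWalk (G : V → V → Prop) (u v : V) (p : List V) : Prop :=
  p.Chain' G ∧ p.head? = some u ∧ p.getLast? = some v

/-- The directed edge `(a,b)` occurs on the walk `p`. -/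
def EdgeOn (a b : V) (p : List V) : Prop := (a, b) ∈ p.zip p.tail

/-- `v` is reachable from `u` in `G`. -/
def Reach (G : V → V → Prop) (u v : V) : Prop := ∃ p, IsWalk G u v p

/-- `u` and `v` are strongly connected in `G`. -/
def SConn (G : V → V → Prop) (u v : V) : Prop := Reach G u v ∧ Reach G v u

def StronglyConnected (G : V → V → Prop) : Prop := ∀ u v, Reach G u v

/-- `G` with the edge `(a,b)` deleted. -/
def DelEdge (G : V → V → Prop) (a b : V) : V → V → Prop :=
  fun x y => G x y ∧ ¬(x = a ∧ y = b)

/-- `G` with the vertex `u` (and all incident edges) deleted. -/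
def DelVertex (G : V → V → Prop) (u : V) : V → V → Prop :=
  fun x y => G x y ∧ x ≠ u ∧ y ≠ u

/-- `C` is a strongly connected component of `G`. -/
def IsSCC (G : V → V → Prop) (C : Set V) : Prop :=
  C.Nonempty ∧ (∀ x ∈ C, ∀ y ∈ C, SConn G x y) ∧ ∀ x ∈ C, ∀ y, SConn G x y → y ∈ C

/-- `(a,b)` is a strong bridge: an edge whose removal increases the number of
strongly connected components, i.e. it separates some strongly connected pair. -/
def IsStrongBridge (G : V → V → Prop) (a b : V) : Prop :=
  G a b ∧ ∃ x y, SConn G x y ∧ ¬ SConn (DelEdge G a b) x y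

/-- `u` is a strong articulation point: removing it increases the number of strongly
connected components, i.e. it separates some strongly connected pair of other vertices. -/
def IsStrongArticulationPoint (G : V → V → Prop) (u : V) : Prop :=
  ∃ x y, x ≠ u ∧ y ≠ u ∧ SConn G x y ∧ ¬ SConn (DelVertex G u) x y

/-- The reverse digraph. -/
def Rev (G : V → V → Prop) : V → V → Prop := fun x y => G y x

/-- `u` dominates `v` in the flow graph `G_s`; equivalently, `u` is an ancestor of `v`
(and `v` a descendant of `u`) in the dominator tree of `G_s`. -/
def Dom (G : V → V → Prop) (s u v : V) : Prop :=
  ∀ p, IsWalk G s v p → u ∈ p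

/-- `u` is the immediate dominator of `v` in `G_s` (the parent of `v` in the dominator tree). -/
def Idom (G : V → V → Prop) (s u v : V) : Prop :=
  u ≠ v ∧ Dom G s u v ∧ ∀ w, w ≠ v → Dom G s w v → Dom G s w u

/-- Edge `(a,b)` is a bridge of the flow graph `G_s`: every walk from `s` to `b` uses it. -/
def IsBridge (G : V → V → Prop) (s a b : V) : Prop :=
  G a b ∧ ∀ p, IsWalk G s b p → EdgeOn a b p

/-- `r` is the head of some bridge of `G_s`, i.e. a non-`s` root in the bridge
decomposition of the dominator tree. -/
def IsBridgeHead (G : V → V → Prop) (s r : V) : Prop :=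
  ∃ a, IsBridge G s a r

/-- `r` is the root of the tree containing `x` in the bridge decomposition of the
dominator tree of `G_s`: `r` dominates `x`, `r` is `s` or a bridge head, and every
bridge head dominating `x` dominates `r`. -/
def IsBDRoot (G : V → V → Prop) (s r x : V) : Prop :=
  Dom G s r x ∧ (r = s ∨ IsBridgeHead G s r) ∧
    ∀ z, Dom G s z x → IsBridgeHead G s z → Dom G s z r

/-- A depth-first search tree of `G` rooted at `s`, given by a parent function and a
preorder numbering. -/
structure DFSTree (G : V → V → Prop) (s : V) where
  parent : V → V
  pre : V → ℕ
  parent_root : parent s = s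
  parent_edge : ∀ v, v ≠ s → G (parent v) v
  root_reach : ∀ v, ∃ n, parent^[n] v = s
  pre_inj : Function.Injective pre
  pre_parent : ∀ v, v ≠ s → pre (parent v) < pre v
  /-- Descendants of a vertex form a contiguous interval in preorder. -/
  interval : ∀ u v w, (∃ n, parent^[n] w = u) → pre u ≤ pre v → pre v ≤ pre w →
      ∃ n, parent^[n] v = u
  /-- The defining property of depth-first search trees: every edge going forward
  in preorder goes to a descendant. -/
  dfs_edge : ∀ u v, G u v → pre u < pre v → ∃ n, parent^[n] v = u

/-- `u` is an ancestor of `v` in the tree `T` (every vertex is an ancestor of itself). -/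
def DFSTree.Anc {G : V → V → Prop} {s : V} (T : DFSTree G s) (u v : V) : Prop :=
  ∃ n, T.parent^[n] v = u

/-- `x ∈ loop(u)` with respect to the tree-ancestor relation `tanc`: `x` is a descendant
of `u` and there is a walk from `x` to `u` using only descendants of `u`. -/
def InLoop (G : V → V → Prop) (tanc : V → V → Prop) (u x : V) : Prop :=
  tanc u x ∧ ∃ p, IsWalk G x u p ∧ ∀ y ∈ p, tanc u y

/-- `hp` is the parent function of the loop nesting tree of `G_s` with respect to the
DFS-tree ancestor relation `tanc`: `hp x` is the nearest proper ancestor `u` of `x`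
in the DFS tree with `x ∈ loop(u)`. -/
def IsLoopParent (G : V → V → Prop) (s : V) (tanc : V → V → Prop) (hp : V → V) : Prop :=
  hp s = s ∧ ∀ x, x ≠ s →
    (tanc (hp x) x ∧ hp x ≠ x ∧ InLoop G tanc (hp x) x ∧
      ∀ u, tanc u x → u ≠ x → InLoop G tanc u x → tanc u (hp x))

/-- `u` is an ancestor of `v` in the loop nesting tree with parent function `hp`. -/
def HAnc (hp : V → V) (u v : V) : Prop := ∃ n, hp^[n] v = u

/-- `w` is the nearest common ancestor of `x` and `y` in the loop nesting tree
with parent function `hp`. -/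
def HNca (hp : V → V) (x y w : V) : Prop :=
  HAnc hp w x ∧ HAnc hp w y ∧ ∀ z, HAnc hp z x → HAnc hp z y → HAnc hp z w

/-- `u` is a nontrivial dominator of `G_s`: `u ≠ s` and `u` is not a leaf of the
dominator tree (it properly dominates some vertex). -/
def NontrivialDom (G : V → V → Prop) (s u : V) : Prop :=
  u ≠ s ∧ ∃ w, w ≠ u ∧ Dom G s u w

/-- `a` and `b` are siblings in the dominator tree of `G_s`. -/
def SiblingInD (G : V → V → Prop) (s a b : V) : Prop :=
  a ≠ b ∧ ∃ w, Idom G s w a ∧ Idom G s w b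

/-- Given the bridge-decomposition root function `r` and loop-nesting parent `hp`,
`z` is a boundary vertex. -/
def Boundary (s : V) (r hp : V → V) (z : V) : Prop := z = s ∨ r (hp z) ≠ r z

/-- `z` is the nearest boundary ancestor of `x` in the loop nesting tree. -/
def IsNearestBoundary (s : V) (r hp : V → V) (x z : V) : Prop :=
  HAnc hp z x ∧ Boundary s r hp z ∧
    ∀ z', HAnc hp z' x → Boundary s r hp z' → HAnc hp z' z

/-- `x` and `y` are 2-edge-connected: no single edge deletion leaves them in
different strongly connected components. -/
def TwoEdgeConnected (G : V → V → Prop) (x y : V) : Prop :=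
  ∀ a b, G a b → SConn (DelEdge G a b) x y


/-!
Let `z` be a vertex of minimal preorder number on the walk. Following the walk from `z`
never leaves the subtree of `z`: an edge going forward in preorder goes to a descendant,
and an edge going backward lands in the preorder interval between `z` and a descendant of
`z`, which consists of descendants of `z`. Hence `w` descends from `z`, and then so does
`v`, since `pre z ≤ pre v < pre w`.
-/

namespace DFSTree

variable {G : V → V → Prop} {s : V} (T : DFSTree G s)

theorem anc_trans {a b c : V} (hab : T.Anc a b) (hbc : T.Anc b c) : T.Anc a c := by
  obtain ⟨n, rfl⟩ := hab
  obtain ⟨m, rfl⟩ := hbc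
  exact ⟨n + m, Function.iterate_add_apply _ n m c⟩

theorem anc_of_edge {z a b : V} (hza : T.Anc z a) (hab : G a b) (hzb : T.pre z ≤ T.pre b) :
    T.Anc z b := by
  rcases lt_or_ge (T.pre a) (T.pre b) with hlt | hge
  · exact T.anc_trans hza (T.dfs_edge a b hab hlt)
  · exact T.interval z b a hza hzb hge

theorem anc_of_isChain {z x : V} {q : List V} (hq : (x :: q).IsChain G) (hzx : T.Anc z x)
    (hmin : ∀ y ∈ q, T.pre z ≤ T.pre y) : ∀ y ∈ x :: q, T.Anc z y := by
  induction q generalizing x with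
  | nil => simpa using hzx
  | cons b q ih =>
    obtain ⟨hxb, hq⟩ := List.isChain_cons_cons.1 hq
    have hzb : T.Anc z b := T.anc_of_edge hzx hxb (hmin b List.mem_cons_self)
    exact List.forall_mem_cons.2
      ⟨hzx, ih hq hzb fun y hy => hmin y (List.mem_cons_of_mem b hy)⟩

end DFSTree

/-- Path Lemma: if `pre v < pre w` in a DFS tree `T` of `G`, then every walk from `v`
to `w` in `G` contains a common ancestor of `v` and `w` in `T`. -/
theorem stmt0 (G : V → V → Prop) (s : V) (T : DFSTree G s)
    (v w : V) (hvw : T.pre v < T.pre w)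
    (p : List V) (hwalk : IsWalk G v w p) :
    ∃ a ∈ p, T.Anc a v ∧ T.Anc a w := by
  classical
  obtain ⟨hchain, hhead, hlast⟩ := hwalk
  have hvp : v ∈ p := List.mem_of_mem_head? hhead
  obtain ⟨z, hzp, hmin⟩ := p.toFinset.exists_min_image T.pre ⟨v, List.mem_toFinset.2 hvp⟩
  simp only [List.mem_toFinset] at hzp hmin
  obtain ⟨p₁, p₂, rfl⟩ := List.append_of_mem hzp
  have hwp₂ : w ∈ z :: p₂ := List.mem_of_mem_getLast? <| by
    rwa [← List.getLast?_append_of_ne_nil p₁ (List.cons_ne_nil z p₂)]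
  have hzw : T.Anc z w :=
    T.anc_of_isChain (hchain.suffix (List.suffix_append p₁ _)) ⟨0, rfl⟩
      (fun y hy => hmin y (by simp [hy])) w hwp₂
  exact ⟨z, hzp, T.interval z v w hzw (hmin v hvp) hvw.le, hzw⟩

end StrongConn
end

section
/- Let G be a strongly connected digraph with start vertex s, and let e=(u,v) be an edge that is a bridge of the flow graph G_s (i.e., every path from s to v contains e). Then for every vertex w that is not a descendant of v in the dominator tree D of G_s, every simple path in G from w to any descendant of v in D must contain the edge (u,v). -/
namespace StrongConn

variable {V : Type*}

/-!
Since `v` does not dominate `w`, some walk `q` from `s` to `w` avoids `v`. Following `q` by `p`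
reaches `z`, so it meets `v`, which must therefore lie on `p`. Following `q` by the segment `r` of
`p` up to `v` gives a walk from `s` to `v`, which uses the bridge `(u,v)`; as `v ∉ q` and `w ≠ v`,
the bridge is neither on `q` nor at the junction, hence on `r` and so on `p`.
-/

section Walks

variable {G : V → V → Prop} {a b s u v w x y z : V}

theorem edgeOn_cons {l : List V} :
    EdgeOn a b (x :: l) ↔ (x = a ∧ l.head? = some b) ∨ EdgeOn a b l := by
  cases l <;> simp [EdgeOn, eq_comm]

theorem edgeOn_append {l₁ l₂ : List V} :
    EdgeOn a b (l₁ ++ l₂) ↔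
      EdgeOn a b l₁ ∨ EdgeOn a b l₂ ∨ (l₁.getLast? = some a ∧ l₂.head? = some b) := by
  induction l₁ with
  | nil => simp [EdgeOn]
  | cons x l₁ ih =>
    rw [List.cons_append, edgeOn_cons, ih, edgeOn_cons]
    cases l₁ <;> simp [EdgeOn] <;> tauto

theorem EdgeOn.mem_right {p : List V} (h : EdgeOn a b p) : b ∈ p :=
  List.mem_of_mem_tail (List.of_mem_zip h).2

theorem IsWalk.getLast_mem {p : List V} (h : IsWalk G x y p) : y ∈ p :=
  List.mem_of_mem_getLast? h.2.2

theorem IsWalk.append {p q : List V} (hp : IsWalk G x y p) (hq : IsWalk G y z q) :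
    IsWalk G x z (p.dropLast ++ q) := by
  obtain ⟨hpc, hph, hpl⟩ := hp
  obtain ⟨hqc, hqh, hql⟩ := hq
  have hp : p.dropLast ++ [y] = p := List.dropLast_append_getLast? y hpl
  rw [← hp] at hpc hph
  obtain ⟨hdc, -, hdy⟩ := List.isChain_append.mp hpc
  refine ⟨List.isChain_append.mpr ⟨hdc, hqc, ?_⟩, ?_, ?_⟩
  · simpa [hqh] using hdy
  · rcases h : p.dropLast with _ | ⟨c, d⟩ <;> simp_all
  · simp [List.getLast?_append, hql]

theorem IsWalk.exists_prefix {p : List V} (hp : IsWalk G x z p) (hy : y ∈ p) :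
    ∃ r t, IsWalk G x y r ∧ p = r ++ t := by
  obtain ⟨l₁, l₂, rfl⟩ := List.append_of_mem hy
  have hc : (l₁ ++ [y] ++ l₂).IsChain G := by
    rw [List.append_assoc, List.singleton_append]
    exact hp.1
  refine ⟨l₁ ++ [y], l₂, ⟨hc.left_of_append, ?_, by simp⟩, by simp⟩
  cases l₁ <;> simpa using hp.2.1

theorem Dom.mem_of_isWalk {p q : List V} (hz : Dom G s v z) (hq : IsWalk G s w q) (hvq : v ∉ q)
    (hp : IsWalk G w z p) : v ∈ p := by
  rcases List.mem_append.mp (hz _ (hq.append hp)) with h | h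
  · exact absurd (List.mem_of_mem_dropLast h) hvq
  · exact h

theorem IsBridge.edgeOn_of_isWalk {q r : List V} (hbr : IsBridge G s u v) (hq : IsWalk G s w q)
    (hvq : v ∉ q) (hr : IsWalk G w v r) : EdgeOn u v r := by
  rcases edgeOn_append.mp (hbr.2 _ (hq.append hr)) with h | h | ⟨-, h⟩
  · exact absurd (List.mem_of_mem_dropLast h.mem_right) hvq
  · exact h
  · obtain rfl : w = v := by simpa [hr.2.1] using h
    exact absurd hq.getLast_mem hvq

end Walks

theorem stmt1_general (G : V → V → Prop) (s u v : V)
    (hbr : IsBridge G s u v)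
    (w : V) (hw : ¬ Dom G s v w)
    (z : V) (hz : Dom G s v z)
    (p : List V) (hwalk : IsWalk G w z p) :
    EdgeOn u v p := by
  obtain ⟨q, hq, hvq⟩ : ∃ q, IsWalk G s w q ∧ v ∉ q := by simpa [Dom] using hw
  obtain ⟨r, t, hr, rfl⟩ := hwalk.exists_prefix (hz.mem_of_isWalk hq hvq hwalk)
  exact edgeOn_append.mpr (Or.inl (hbr.edgeOn_of_isWalk hq hvq hr))

/-- If `(u,v)` is a bridge of `G_s` and `w` is not a descendant of `v` in the dominator
tree, then every simple path in `G` from `w` to any descendant of `v` contains `(u,v)`. -/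
theorem stmt1 (G : V → V → Prop) (hG : StronglyConnected G) (s u v : V)
    (hbr : IsBridge G s u v)
    (w : V) (hw : ¬ Dom G s v w)
    (z : V) (hz : Dom G s v z)
    (p : List V) (hwalk : IsWalk G w z p) (hsimple : p.Nodup) :
    EdgeOn u v p :=
  stmt1_general G s u v hbr w hw z hz p hwalk

end StrongConn
end

section
/- Let G be a strongly connected digraph, s a start vertex, and e=(u,v) a strong bridge of G that is a bridge of the flow graph G_s (so u=d(v)). For any vertex w in D(v) (the set of descendants of v in the dominator tree D), all vertices of H(w) (the descendants of w in the loop nesting tree H of G_s) lie in one strongly connected component C of G\e, and moreover C ⊆ D(v). -/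
namespace StrongConn

variable {V : Type*}

/-!
Take for `C` the strongly connected component of `w` in `G \ (u,v)`. It lies in `D(v)` because
`D(v)` is closed under predecessors in `G \ (u,v)`: a walk from `s` that avoids `v` can enter
`D(v)` only through `v`, hence only through the bridge. For `H(w) ⊆ C`, climb the loop nesting
tree: once `hp x ∈ C ⊆ D(v)`, both `u` and `v` dominate `hp x` and so are DFS-tree ancestors of
it, whereas the tree path from `hp x` to `x` and the loop walk from `x` back to `hp x` run strictly
below `hp x` apart from their endpoint `hp x`; neither can use `(u,v)`.
-/

section Walks

variable {G : V → V → Prop} {a b c : V} {p : List V}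

theorem reach_iff_reflTransGen : Reach G a b ↔ Relation.ReflTransGen G a b := by
  constructor
  · rintro ⟨_ | ⟨a', l⟩, hc, hh, hl⟩
    · simp at hh
    · obtain rfl : a' = a := by simpa using hh
      refine List.relationReflTransGen_of_exists_isChain_cons l hc ?_
      rwa [List.getLast?_eq_some_getLast (List.cons_ne_nil _ _), Option.some_inj] at hl
  · intro h
    obtain ⟨l, hc, hl⟩ := List.exists_isChain_cons_of_relationReflTransGen h
    exact ⟨a :: l, hc, rfl, by rw [List.getLast?_eq_some_getLast (List.cons_ne_nil _ _), hl]⟩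

theorem Reach.refl : Reach G a a := reach_iff_reflTransGen.2 .refl

theorem Reach.trans (h₁ : Reach G a b) (h₂ : Reach G b c) : Reach G a c :=
  reach_iff_reflTransGen.2 ((reach_iff_reflTransGen.1 h₁).trans (reach_iff_reflTransGen.1 h₂))

theorem SConn.refl : SConn G a a := ⟨.refl, .refl⟩

theorem SConn.symm (h : SConn G a b) : SConn G b a := ⟨h.2, h.1⟩

theorem SConn.trans (h₁ : SConn G a b) (h₂ : SConn G b c) : SConn G a c :=
  ⟨h₁.1.trans h₂.1, h₂.2.trans h₁.2⟩

theorem isSCC_setOf_sConn (x : V) : IsSCC G {y | SConn G x y} :=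
  ⟨⟨x, .refl⟩, fun _ hy _ hz => hy.symm.trans hz, fun _ hy _ hyz => hy.trans hyz⟩

theorem IsWalk.cons (hab : G a b) (h : IsWalk G b c p) : IsWalk G a c (a :: p) := by
  obtain ⟨hc, hh, hl⟩ := h
  cases p with
  | nil => simp at hh
  | cons b' p =>
    obtain rfl : b' = b := by simpa using hh
    exact ⟨List.isChain_cons_cons.2 ⟨hab, hc⟩, rfl, by rwa [List.getLast?_cons_cons]⟩

theorem IsWalk.concat (h : IsWalk G a b p) (hbc : G b c) : IsWalk G a c (p ++ [c]) := by
  obtain ⟨hc, hh, hl⟩ := h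
  refine ⟨List.isChain_append.2 ⟨hc, .singleton c, ?_⟩, ?_, by simp⟩
  · simp [hl, hbc]
  · cases p <;> simp_all

theorem IsWalk.prefix {m : V} (h : IsWalk G a b p) (hm : m ∈ p) :
    ∃ q, IsWalk G a m q ∧ ∀ z ∈ q, z ∈ p := by
  obtain ⟨l₁, l₂, rfl⟩ := List.append_of_mem hm
  have hpre : l₁ ++ [m] <+: l₁ ++ m :: l₂ := ⟨l₂, by simp⟩
  refine ⟨l₁ ++ [m], ⟨h.1.prefix hpre, ?_, by simp⟩, fun _ hz => hpre.subset hz⟩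
  rw [← h.2.1]
  cases l₁ <;> simp

theorem reach_delEdge_of_isWalk {x y u v : V} (h : IsWalk G x y p) (hu : u ∈ p → u = y) :
    Reach (DelEdge G u v) x y := by
  induction p generalizing x with
  | nil => simp [IsWalk] at h
  | cons x' t ih =>
    obtain ⟨hc, hh, hl⟩ := h
    simp only [List.head?_cons, Option.some.injEq] at hh
    subst hh
    by_cases hxy : x' = y
    · exact hxy ▸ .refl
    cases t with
    | nil => simp_all
    | cons x₁ t =>
      have hedge : DelEdge G u v x' x₁ :=
        ⟨(List.isChain_cons_cons.1 hc).1, fun h => hxy (h.1 ▸ hu (h.1 ▸ List.mem_cons_self))⟩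
      have htail : IsWalk G x₁ y (x₁ :: t) :=
        ⟨(List.isChain_cons_cons.1 hc).2, rfl, by rwa [List.getLast?_cons_cons] at hl⟩
      exact (reach_iff_reflTransGen.2 (.single hedge)).trans
        (ih htail fun h => hu (List.mem_cons_of_mem _ h))

theorem EdgeOn.getLast?_eq_of_concat (h : EdgeOn a b (p ++ [b])) (hb : b ∉ p) :
    p.getLast? = some a := by
  induction p with
  | nil => simp [EdgeOn] at h
  | cons x t ih =>
    cases t with
    | nil => simpa [EdgeOn, eq_comm] using h
    | cons y t =>
      simp only [EdgeOn, List.cons_append, List.tail_cons, List.zip_cons_cons,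
        List.mem_cons, Prod.mk.injEq] at h hb
      rw [List.getLast?_cons_cons]
      rcases h with ⟨-, rfl⟩ | h
      · exact absurd (Or.inr (Or.inl rfl)) hb
      · exact ih h (by simp_all)

end Walks

section Dominators

variable {G : V → V → Prop} {s u v a b c : V}

theorem Dom.trans (h₁ : Dom G s a b) (h₂ : Dom G s b c) : Dom G s a c := fun p hp => by
  obtain ⟨q, hq, hqp⟩ := hp.prefix (h₂ p hp)
  exact hqp a (h₁ q hq)

theorem IsBridge.dom (hbr : IsBridge G s u v) : Dom G s u v :=
  fun p hp => (List.of_mem_zip (hbr.2 p hp)).1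

/-- A walk from `s` to `a` avoiding `v` extends along `(a,b)` to a walk to `b`, so `b = v`, and
then `(a,b)` is the bridge. -/
theorem IsBridge.dom_of_delEdge (hbr : IsBridge G s u v) (hab : DelEdge G u v a b)
    (hb : Dom G s v b) : Dom G s v a := by
  intro p hp
  by_contra hvp
  have hwalk := hp.concat hab.1
  obtain rfl : v = b := by simpa [hvp] using hb _ hwalk
  have hlast := (hbr.2 _ hwalk).getLast?_eq_of_concat hvp
  exact hab.2 ⟨Option.some.inj (hp.2.2.symm.trans hlast), rfl⟩

theorem IsBridge.dom_of_reach_delEdge (hbr : IsBridge G s u v) (hab : Reach (DelEdge G u v) a b)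
    (hb : Dom G s v b) : Dom G s v a :=
  Relation.ReflTransGen.head_induction_on (reach_iff_reflTransGen.1 hab) hb
    fun hxy _ ih => hbr.dom_of_delEdge hxy ih

end Dominators

namespace DFSTree

variable {G : V → V → Prop} {s : V} (T : DFSTree G s)

theorem pre_parent_le (x : V) : T.pre (T.parent x) ≤ T.pre x := by
  by_cases hx : x = s
  · rw [hx, T.parent_root]
  · exact (T.pre_parent x hx).le

theorem pre_iterate_parent_le (n : ℕ) (x : V) : T.pre (T.parent^[n] x) ≤ T.pre x := by
  induction n with
  | zero => rfl
  | succ n ih =>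
    rw [Function.iterate_succ_apply']
    exact (T.pre_parent_le _).trans ih

variable {T}

theorem Anc.antisymm {x y : V} (hxy : T.Anc x y) (hyx : T.Anc y x) : x = y := by
  obtain ⟨_ | n, rfl⟩ := hxy
  · rfl
  obtain ⟨m, hm⟩ := hyx
  by_cases hy : y = s
  · subst hy
    exact Function.iterate_fixed T.parent_root _
  have h₁ := T.pre_iterate_parent_le m (T.parent^[n + 1] y)
  have h₂ := T.pre_iterate_parent_le n (T.parent y)
  rw [hm, Function.iterate_succ_apply] at h₁
  have := T.pre_parent y hy
  omega

theorem exists_isWalk_iterate_parent (n : ℕ) (x : V) :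
    ∃ p, IsWalk G (T.parent^[n] x) x p ∧ ∀ z ∈ p, T.Anc z x := by
  induction n with
  | zero => exact ⟨[x], ⟨.singleton x, rfl, rfl⟩, by simpa using ⟨0, rfl⟩⟩
  | succ n ih =>
    obtain ⟨p, hp, hanc⟩ := ih
    rw [Function.iterate_succ_apply']
    by_cases hs : T.parent^[n] x = s
    · have hroot : T.parent (T.parent^[n] x) = T.parent^[n] x := by rw [hs, T.parent_root]
      rw [hroot]
      exact ⟨p, hp, hanc⟩
    refine ⟨_, hp.cons (T.parent_edge _ hs), ?_⟩
    intro z hz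
    rcases List.mem_cons.1 hz with rfl | hz
    · exact ⟨n + 1, Function.iterate_succ_apply' ..⟩
    · exact hanc z hz

theorem anc_of_dom {a x : V} (h : Dom G s a x) : T.Anc a x := by
  obtain ⟨n, hn⟩ := T.root_reach x
  obtain ⟨p, hp, hanc⟩ := T.exists_isWalk_iterate_parent n x
  exact hanc a (h p (hn ▸ hp))

/-- The tree path from `y` down to a descendant `x` enters only proper descendants of `y`. -/
theorem reach_delEdge_of_anc {x y u v : V} (hyx : T.Anc y x) (hvy : T.Anc v y) :
    Reach (DelEdge G u v) y x := by
  obtain ⟨n, hn⟩ := hyx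
  rw [reach_iff_reflTransGen]
  induction n generalizing x with
  | zero => exact hn ▸ .refl
  | succ n ih =>
    rw [Function.iterate_succ_apply] at hn
    by_cases hxs : x = s
    · rw [hxs, T.parent_root] at hn
      exact hxs ▸ ih hn
    by_cases hxv : x = v
    · subst hxv
      exact (Anc.antisymm ⟨n + 1, hn⟩ hvy) ▸ .refl
    exact (ih hn).tail ⟨T.parent_edge x hxs, fun h => hxv h.2⟩

end DFSTree

section LoopNesting

variable {G : V → V → Prop} {s u v : V} {T : DFSTree G s} {hp : V → V}

theorem sConn_delEdge_loopParent (hbr : IsBridge G s u v) (hlp : IsLoopParent G s T.Anc hp)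
    {x : V} (hx : Dom G s v (hp x)) : SConn (DelEdge G u v) (hp x) x := by
  by_cases hxs : x = s
  · rw [hxs, hlp.1]
    exact .refl
  obtain ⟨hanc, -, ⟨-, p, hwalk, hbelow⟩, -⟩ := hlp.2 x hxs
  have hu : T.Anc u (hp x) := DFSTree.anc_of_dom (hbr.dom.trans hx)
  exact ⟨DFSTree.reach_delEdge_of_anc hanc (DFSTree.anc_of_dom hx),
    reach_delEdge_of_isWalk hwalk fun hup => hu.antisymm (hbelow u hup)⟩

theorem sConn_delEdge_of_hAnc (hbr : IsBridge G s u v) (hlp : IsLoopParent G s T.Anc hp)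
    {w x : V} (hw : Dom G s v w) (hwx : HAnc hp w x) : SConn (DelEdge G u v) w x := by
  obtain ⟨n, hn⟩ := hwx
  induction n generalizing x with
  | zero => exact hn ▸ .refl
  | succ n ih =>
    rw [Function.iterate_succ_apply] at hn
    have hwp : SConn (DelEdge G u v) w (hp x) := ih hn
    exact hwp.trans (sConn_delEdge_loopParent hbr hlp (hbr.dom_of_reach_delEdge hwp.2 hw))

end LoopNesting

theorem stmt3_general (G : V → V → Prop) (s u v : V)
    (hbr : IsBridge G s u v)
    (T : DFSTree G s) (hp : V → V) (hlp : IsLoopParent G s T.Anc hp)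
    (w : V) (hw : Dom G s v w) :
    ∃ C : Set V, IsSCC (DelEdge G u v) C ∧ {x | HAnc hp w x} ⊆ C ∧
      C ⊆ {x | Dom G s v x} :=
  ⟨{x | SConn (DelEdge G u v) w x}, isSCC_setOf_sConn w,
    fun _ hx => sConn_delEdge_of_hAnc hbr hlp hw hx,
    fun _ hx => hbr.dom_of_reach_delEdge hx.2 hw⟩

/-- For a strong bridge `(u,v)` that is a bridge of `G_s` and any `w ∈ D(v)`, the set
`H(w)` is contained in a strongly connected component `C` of `G \ e` with `C ⊆ D(v)`. -/
theorem stmt3 (G : V → V → Prop) (hG : StronglyConnected G) (s u v : V)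
    (hsb : IsStrongBridge G u v) (hbr : IsBridge G s u v)
    (T : DFSTree G s) (hp : V → V) (hlp : IsLoopParent G s T.Anc hp)
    (w : V) (hw : Dom G s v w) :
    ∃ C : Set V, IsSCC (DelEdge G u v) C ∧ {x | HAnc hp w x} ⊆ C ∧
      C ⊆ {x | Dom G s v x} :=
  stmt3_general G s u v hbr T hp hlp w hw

end StrongConn
end
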